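/- For any finite B ⊂ Z^d and any x ≠ x' in B, one has G_B(x,x) · G_{B∖{x}}(x',x') = G_B(x',x') · G_{B∖{x'}}(x,x). -/

import Mathlib

/-!
The Neumann series `∑ₖ P_Bᵏ` converges because `f(y) = C - y_c²` is a Lyapunov function for the
killed walk: averaging over all `2d` neighbours raises `y_c²` by exactly `1/d`, so `P_B f ≤ f - 1/d`
on `B` once `C` makes `f` nonnegative next to `B`, and then `∑ₖ P_Bᵏ 1 ≤ d f`. Hence `G_B` is the
inverse of `I - P_B` on `B`. The inverse on `B ∖ {x}` is then given by the Schur complement of the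
entry `G_B(x,x)`:
`G_B(x,x) G_{B∖{x}}(y,z) = G_B(x,x) G_B(y,z) - G_B(y,x) G_B(x,z)`,
and for `y = z = x'` the right-hand side is symmetric in `x` and `x'`.
-/

def adj {d : ℕ} (x y : Fin d → ℤ) : Prop := (∑ i : Fin d, |x i - y i|) = 1

instance {d : ℕ} (x y : Fin d → ℤ) : Decidable (adj x y) := by unfold adj; infer_instance

noncomputable def killedKernel {d : ℕ} (B : Finset (Fin d → ℤ)) : Matrix B B ℝ :=
  fun x y => if adj (x : Fin d → ℤ) (y : Fin d → ℤ) then 1 / (2 * (d : ℝ)) else 0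

/-- The Green's function `G_B(x,y) = E_x[∑_{k<τ_B} 1{X_k=y}] = ∑_k (P_B)^k(x,y)` of
simple random walk on `ℤ^d` killed upon exiting the finite set `B`, extended by `0`
outside `B`. -/
noncomputable def green {d : ℕ} (B : Finset (Fin d → ℤ)) (x y : Fin d → ℤ) : ℝ :=
  if hx : x ∈ B then (if hy : y ∈ B then
    ∑' k : ℕ, ((killedKernel B) ^ k) ⟨x, hx⟩ ⟨y, hy⟩ else 0) else 0

open Finset Matrix

theorem Matrix.summable_pow_of_mulVec_add_le {ι : Type*} [Fintype ι] [DecidableEq ι]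
    {P : Matrix ι ι ℝ} (hP : ∀ i j, 0 ≤ P i j) {f : ι → ℝ} (hf : ∀ i, 0 ≤ f i) {ε : ℝ}
    (hε : 0 < ε) (hPf : ∀ i, (P *ᵥ f) i + ε ≤ f i) : Summable fun k => P ^ k := by
  refine Pi.summable.2 fun i => Pi.summable.2 fun j => ?_
  have hgap : ∀ w, ε ≤ (f - P *ᵥ f) w := fun w => by rw [Pi.sub_apply]; linarith [hPf w]
  have hstep : ∀ k, ε * (P ^ k) i j ≤ (P ^ k *ᵥ f) i - (P ^ (k + 1) *ᵥ f) i := fun k => by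
    rw [pow_succ, ← mulVec_mulVec, ← Pi.sub_apply, ← mulVec_sub, mulVec, dotProduct]
    calc ε * (P ^ k) i j ≤ (P ^ k) i j * (f - P *ᵥ f) j := by
          rw [mul_comm]
          exact mul_le_mul_of_nonneg_left (hgap j) (pow_apply_nonneg hP k i j)
      _ ≤ ∑ w, (P ^ k) i w * (f - P *ᵥ f) w :=
          single_le_sum (fun w _ => mul_nonneg (pow_apply_nonneg hP k i w)
            (hε.le.trans (hgap w))) (mem_univ j)
  refine summable_of_sum_range_le (c := f i / ε) (fun k => pow_apply_nonneg hP k i j) fun n => ?_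
  rw [← mul_le_mul_iff_of_pos_left hε, mul_div_cancel₀ _ hε.ne', mul_sum]
  calc ∑ k ∈ range n, ε * (P ^ k) i j
      ≤ ∑ k ∈ range n, ((P ^ k *ᵥ f) i - (P ^ (k + 1) *ᵥ f) i) := sum_le_sum fun k _ => hstep k
    _ = f i - (P ^ n *ᵥ f) i := by rw [sum_range_sub' (fun k => (P ^ k *ᵥ f) i), pow_zero, one_mulVec]
    _ ≤ f i := sub_le_self _ (sum_nonneg fun w _ => mul_nonneg (pow_apply_nonneg hP n i w) (hf w))

theorem schur_complement_erase {α R : Type*} [DecidableEq α] [CommRing R] {A G H : Matrix α α R}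
    {s : Finset α} {x : α} (hx : x ∈ s)
    (hAG : ∀ y ∈ s, ∀ z ∈ s, ∑ w ∈ s, A y w * G w z = (1 : Matrix α α R) y z)
    (hHA : ∀ y ∈ s.erase x, ∀ z ∈ s.erase x, ∑ w ∈ s.erase x, H y w * A w z = (1 : Matrix α α R) y z)
    {y z : α} (hy : y ∈ s.erase x) (hz : z ∈ s.erase x) :
    G x x * H y z = G y z * G x x - G y x * G x z := by
  -- `F` vanishes at `x`, which makes it `G x x` times the column `z` of the inverse on `s.erase x`.
  set F : α → R := fun w => G w z * G x x - G w x * G x z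
  have hAF : ∀ v ∈ s.erase x, ∑ w ∈ s.erase x, A v w * F w = G x x * (1 : Matrix α α R) v z := by
    intro v hv
    have hvs := mem_of_mem_erase hv
    calc ∑ w ∈ s.erase x, A v w * F w = ∑ w ∈ s, A v w * F w := by
          rw [← add_sum_erase s _ hx, show F x = 0 by ring, mul_zero, zero_add]
      _ = (∑ w ∈ s, A v w * G w z) * G x x - (∑ w ∈ s, A v w * G w x) * G x z := by
          simp only [sum_mul, ← sum_sub_distrib, F, mul_sub, mul_assoc]
      _ = G x x * (1 : Matrix α α R) v z := by
          rw [hAG v hvs z (mem_of_mem_erase hz), hAG v hvs x hx, one_apply_ne (ne_of_mem_erase hv),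
            zero_mul, sub_zero, mul_comm]
  calc G x x * H y z = ∑ v ∈ s.erase x, H y v * (G x x * (1 : Matrix α α R) v z) := by
        simp only [one_apply, mul_ite, mul_one, mul_zero, sum_ite_eq', if_pos hz, mul_comm]
    _ = ∑ v ∈ s.erase x, H y v * ∑ w ∈ s.erase x, A v w * F w :=
        sum_congr rfl fun v hv => by rw [hAF v hv]
    _ = ∑ w ∈ s.erase x, (∑ v ∈ s.erase x, H y v * A v w) * F w := by
        simp only [mul_sum, sum_mul, mul_assoc]
        exact sum_comm
    _ = F y := by
        rw [sum_congr rfl fun w hw => by rw [hHA y hy w hw]]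
        simp only [one_apply, ite_mul, one_mul, zero_mul, sum_ite_eq, if_pos hy]

section

variable {d : ℕ}

def neighbor (i : Fin d → ℤ) (p : Fin d × Bool) : Fin d → ℤ :=
  Function.update i p.1 (i p.1 + if p.2 then 1 else -1)

theorem exists_neighbor_eq_of_adj {i j : Fin d → ℤ} (h : adj i j) : ∃ p, neighbor i p = j := by
  obtain ⟨c, -, hc⟩ := exists_ne_zero_of_sum_ne_zero (h ▸ one_ne_zero)
  have hsplit := add_sum_erase univ (fun c => |i c - j c|) (mem_univ c)
  have hrest_nonneg : 0 ≤ ∑ c' ∈ univ.erase c, |i c' - j c'| := sum_nonneg fun _ _ => abs_nonneg _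
  have hc_pos : 0 < |i c - j c| := (abs_nonneg _).lt_of_ne (Ne.symm hc)
  have hc_one : |i c - j c| = 1 := by rw [adj] at h; linarith
  have hrest : ∀ c' ∈ univ.erase c, |i c' - j c'| = 0 :=
    (sum_eq_zero_iff_of_nonneg fun _ _ => abs_nonneg _).1 (by rw [adj] at h; linarith)
  refine ⟨(c, decide (i c < j c)), funext fun c' => ?_⟩
  rcases eq_or_ne c' c with rfl | hc'
  · simp only [neighbor, Function.update_self, decide_eq_true_eq]
    split_ifs <;> grind
  · rw [neighbor, Function.update_of_ne hc']
    grind [hrest c' (mem_erase.2 ⟨hc', mem_univ _⟩)]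

theorem sum_neighbor_apply_sq (i : Fin d → ℤ) (c : Fin d) :
    ∑ p, neighbor i p c ^ 2 = 2 * d * i c ^ 2 + 2 := by
  have hterm : ∀ c', ∑ b, neighbor i (c', b) c ^ 2 = 2 * i c ^ 2 + if c = c' then 2 else 0 := by
    intro c'
    simp only [Fintype.sum_bool, neighbor, Function.update_apply, if_true, Bool.false_eq_true,
      if_false]
    split_ifs with h
    · subst h; ring
    · ring
  rw [Fintype.sum_prod_type]
  simp only [hterm, sum_add_distrib, sum_ite_eq, mem_univ, if_true, sum_const, card_univ,
    Fintype.card_fin, nsmul_eq_mul]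
  ring

theorem abs_neighbor_apply_le (i : Fin d → ℤ) (p : Fin d × Bool) (c : Fin d) :
    |neighbor i p c| ≤ |i c| + 1 := by
  rw [neighbor, Function.update_apply]
  split_ifs with hc <;> grind

noncomputable def srwKernel (d : ℕ) : Matrix (Fin d → ℤ) (Fin d → ℤ) ℝ :=
  of fun x y => if adj x y then 1 / (2 * (d : ℝ)) else 0

theorem killedKernel_nonneg (B : Finset (Fin d → ℤ)) (i j : B) : 0 ≤ killedKernel B i j := by
  unfold killedKernel; positivity

theorem killedKernel_mulVec_apply_le {B : Finset (Fin d → ℤ)} {f : (Fin d → ℤ) → ℝ} (i : B)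
    (hf : ∀ p, 0 ≤ f (neighbor i p)) :
    (killedKernel B *ᵥ fun j => f j) i ≤ (∑ p, f (neighbor i p)) / (2 * d) := by
  have hsub : {j ∈ B | adj i j} ⊆ univ.image (neighbor i) := fun j hj =>
    mem_image.2 <| (exists_neighbor_eq_of_adj (mem_filter.1 hj).2).imp fun p hp => ⟨mem_univ p, hp⟩
  calc (killedKernel B *ᵥ fun j => f j) i = (∑ j ∈ B with adj i j, f j) / (2 * d) := by
        simp only [mulVec, dotProduct, killedKernel, sum_filter, sum_div]
        rw [← sum_coe_sort B]
        exact sum_congr rfl fun j _ => by split_ifs <;> ring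
    _ ≤ (∑ j ∈ univ.image (neighbor i), f j) / (2 * d) := by
        gcongr
        exact fun j hj _ => by obtain ⟨p, -, rfl⟩ := mem_image.1 hj; exact hf p
    _ ≤ (∑ p, f (neighbor i p)) / (2 * d) := by
        gcongr
        exact sum_image_le_of_nonneg fun j hj => by
          obtain ⟨p, -, rfl⟩ := mem_image.1 hj; exact hf p

theorem exists_killedKernel_mulVec_add_le (c : Fin d) (B : Finset (Fin d → ℤ)) :
    ∃ f : B → ℝ, (∀ i, 0 ≤ f i) ∧ ∀ i, (killedKernel B *ᵥ f) i + 1 / d ≤ f i := by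
  set C : ℝ := ∑ y ∈ B, ((|y c| + 1 : ℤ) : ℝ) ^ 2
  have hC : ∀ y ∈ B, ∀ t : ℤ, |t| ≤ |y c| + 1 → (t : ℝ) ^ 2 ≤ C := fun y hy t ht => by
    refine le_trans ?_ (single_le_sum (f := fun y : Fin d → ℤ => ((|y c| + 1 : ℤ) : ℝ) ^ 2)
      (fun _ _ => sq_nonneg _) hy)
    exact_mod_cast sq_le_sq' (abs_le.1 ht).1 (abs_le.1 ht).2
  have hd : (0 : ℝ) < d := by exact_mod_cast c.pos
  refine ⟨fun y => C - (y.1 c : ℝ) ^ 2, fun y => sub_nonneg.2 (hC y y.2 _ (by linarith)), fun i => ?_⟩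
  calc (killedKernel B *ᵥ fun y => C - (y.1 c : ℝ) ^ 2) i + 1 / d
      ≤ (∑ p, (C - (neighbor i p c : ℝ) ^ 2)) / (2 * d) + 1 / d := by
        gcongr
        exact killedKernel_mulVec_apply_le (f := fun y => C - (y c : ℝ) ^ 2) i fun p =>
          sub_nonneg.2 (hC i i.2 _ (abs_neighbor_apply_le i p c))
    _ = C - (i.1 c : ℝ) ^ 2 := by
        have hsq : ∑ p, (neighbor i p c : ℝ) ^ 2 = 2 * d * (i.1 c : ℝ) ^ 2 + 2 := by
          exact_mod_cast sum_neighbor_apply_sq i.1 c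
        rw [sum_sub_distrib, hsq, sum_const, card_univ, Fintype.card_prod, Fintype.card_fin,
          Fintype.card_bool, nsmul_eq_mul]
        field_simp
        push_cast
        ring

theorem summable_pow_killedKernel (hd : 0 < d) (B : Finset (Fin d → ℤ)) :
    Summable fun k => killedKernel B ^ k := by
  obtain ⟨f, hf, hPf⟩ := exists_killedKernel_mulVec_add_le ⟨0, hd⟩ B
  exact summable_pow_of_mulVec_add_le (killedKernel_nonneg B) hf (by positivity) hPf

theorem green_of_mem (hd : 0 < d) {B : Finset (Fin d → ℤ)} {x y : Fin d → ℤ} (hx : x ∈ B)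
    (hy : y ∈ B) : green B x y = (∑' k, killedKernel B ^ k) ⟨x, hx⟩ ⟨y, hy⟩ := by
  have hsum := summable_pow_killedKernel hd B
  rw [green, dif_pos hx, dif_pos hy, ← tsum_apply (Pi.summable.1 hsum _), ← tsum_apply hsum]
  rfl

theorem one_sub_killedKernel (B : Finset (Fin d → ℤ)) :
    1 - killedKernel B = (1 - srwKernel d).submatrix (↑) (↑) := by
  rw [← submatrix_one _ Subtype.val_injective]; rfl

theorem sum_one_sub_srwKernel_mul_green (hd : 0 < d) {B : Finset (Fin d → ℤ)} {y z : Fin d → ℤ}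
    (hy : y ∈ B) (hz : z ∈ B) :
    ∑ w ∈ B, (1 - srwKernel d) y w * green B w z = (1 : Matrix _ _ ℝ) y z := by
  calc ∑ w ∈ B, (1 - srwKernel d) y w * green B w z
      = ((1 - killedKernel B) * ∑' k, killedKernel B ^ k) ⟨y, hy⟩ ⟨z, hz⟩ := by
        rw [mul_apply, one_sub_killedKernel, ← sum_coe_sort]
        exact sum_congr rfl fun w _ => by rw [green_of_mem hd w.2 hz]; rfl
    _ = (1 : Matrix _ _ ℝ) y z := by
        rw [(summable_pow_killedKernel hd B).one_sub_mul_tsum_pow,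
          ← submatrix_one _ Subtype.val_injective]; rfl

theorem sum_green_mul_one_sub_srwKernel (hd : 0 < d) {B : Finset (Fin d → ℤ)} {y z : Fin d → ℤ}
    (hy : y ∈ B) (hz : z ∈ B) :
    ∑ w ∈ B, green B y w * (1 - srwKernel d) w z = (1 : Matrix _ _ ℝ) y z := by
  calc ∑ w ∈ B, green B y w * (1 - srwKernel d) w z
      = ((∑' k, killedKernel B ^ k) * (1 - killedKernel B)) ⟨y, hy⟩ ⟨z, hz⟩ := by
        rw [mul_apply, one_sub_killedKernel, ← sum_coe_sort]
        exact sum_congr rfl fun w _ => by rw [green_of_mem hd hy w.2]; rfl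
    _ = (1 : Matrix _ _ ℝ) y z := by
        rw [(summable_pow_killedKernel hd B).tsum_pow_mul_one_sub,
          ← submatrix_one _ Subtype.val_injective]; rfl

end

/-- the two-point exchange identity: for any finite `B ⊂ ℤ^d` and any
`x ≠ x'` in `B`, `G_B(x,x) · G_{B∖{x}}(x',x') = G_B(x',x') · G_{B∖{x'}}(x,x)`. -/
theorem green_exchange (d : ℕ) (hd : 1 ≤ d) (B : Finset (Fin d → ℤ))
    (x x' : Fin d → ℤ) (hx : x ∈ B) (hx' : x' ∈ B) (hne : x ≠ x') :
    green B x x * green (B.erase x) x' x' = green B x' x' * green (B.erase x') x x := by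
  have schur : ∀ {x x'}, x ∈ B → x' ∈ B.erase x →
      green B x x * green (B.erase x) x' x'
        = green B x' x' * green B x x - green B x' x * green B x x' := fun hx hx' =>
    schur_complement_erase hx (fun _ hy _ hz => sum_one_sub_srwKernel_mul_green hd hy hz)
      (fun _ hy _ hz => sum_green_mul_one_sub_srwKernel hd hy hz) hx' hx'
  rw [schur hx (mem_erase.2 ⟨hne.symm, hx'⟩), schur hx' (mem_erase.2 ⟨hne, hx⟩)]
  ring
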